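/- arXiv:1310.7753 — 2 statements merged into one kernel-verified Lean document; each statement's English description precedes it below -/
import Mathlib

section
/- Let G be a group, Y ⊆ G a generating set, and d_Y the word metric on G with respect to Y. Let H ≤ G be a subgroup such that: (i) for every D ≥ 0 there exists B ≥ 0 such that for all g₁, g₂ ∈ G with g₁H ≠ g₂H, the set N_D(g₁H) ∩ g₂H has diameter at most B with respect to d_Y; and (ii) for every r ≥ 0 the set {h ∈ H : d_Y(1,h) ≤ r} is finite. Then the action of G on itself by left multiplication is acylindrical along H with respect to d_Y: for every r ≥ 0 there exists R ≥ 0 such that for all x, y ∈ H with d_Y(x,y) ≥ R, the set {g ∈ G : d_Y(x, gx) ≤ r and d_Y(y, gy) ≤ r} is finite. -/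
open Pointwise

/-- The word metric on a group `G` with respect to a generating set `Y`:
`wordDist Y g h` is the least length of a word in `Y ∪ Y⁻¹` representing `g⁻¹ * h`. -/
noncomputable def wordDist {G : Type*} [Group G] (Y : Set G) (g h : G) : ℕ :=
  sInf {n : ℕ | ∃ w : List G, w.length = n ∧ (∀ t ∈ w, t ∈ Y ∪ Y⁻¹) ∧ w.prod = g⁻¹ * h}

lemma wordDist_congr {G : Type*} [Group G] (Y : Set G) {g h g' h' : G}
    (e : g⁻¹ * h = g'⁻¹ * h') : wordDist Y g h = wordDist Y g' h' := by
  unfold wordDist; rw [e]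

lemma wordDist_symm {G : Type*} [Group G] (Y : Set G) (g h : G) :
    wordDist Y g h = wordDist Y h g := by
  have key : ∀ u : G, {n : ℕ | ∃ w : List G, w.length = n ∧ (∀ t ∈ w, t ∈ Y ∪ Y⁻¹) ∧
      w.prod = u} ⊆ {n : ℕ | ∃ w : List G, w.length = n ∧ (∀ t ∈ w, t ∈ Y ∪ Y⁻¹) ∧
      w.prod = u⁻¹} := by
    rintro u n ⟨w, hlen, hmem, hprod⟩
    refine ⟨(w.map Inv.inv).reverse, by simp [hlen], ?_, ?_⟩
    · intro t ht
      simp only [List.mem_reverse, List.mem_map] at ht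
      obtain ⟨s, hs, rfl⟩ := ht
      rcases hmem s hs with h | h
      · exact Or.inr (by simpa using h)
      · exact Or.inl (by simpa using h)
    · rw [← List.prod_inv_reverse, hprod]
  unfold wordDist
  have e : h⁻¹ * g = (g⁻¹ * h)⁻¹ := by group
  rw [e]
  exact congrArg sInf (le_antisymm (key _) (by simpa using key (g⁻¹ * h)⁻¹))

/-- if the cosets of `H` are uniformly geometrically separated in the word
metric `d_Y`, and balls of `d_Y` contain finitely many elements of `H`, then the left
multiplication action of `G` on itself is acylindrical along `H` with respect to `d_Y`. -/
theorem acylindrical_along_of_coset_separation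
    {G : Type*} [Group G] (Y : Set G) (hY : Subgroup.closure Y = ⊤) (H : Subgroup G)
    (hsep : ∀ D : ℝ, 0 ≤ D → ∃ B : ℝ, 0 ≤ B ∧ ∀ g₁ g₂ : G,
      g₁ • (H : Set G) ≠ g₂ • (H : Set G) →
      ∀ a ∈ {g : G | ∃ p ∈ g₁ • (H : Set G), (wordDist Y g p : ℝ) ≤ D} ∩ g₂ • (H : Set G),
      ∀ b ∈ {g : G | ∃ p ∈ g₁ • (H : Set G), (wordDist Y g p : ℝ) ≤ D} ∩ g₂ • (H : Set G),
        (wordDist Y a b : ℝ) ≤ B)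
    (hproper : ∀ r : ℝ, 0 ≤ r → {h : G | h ∈ H ∧ (wordDist Y 1 h : ℝ) ≤ r}.Finite) :
    ∀ r : ℝ, 0 ≤ r → ∃ R : ℝ, 0 ≤ R ∧ ∀ x ∈ H, ∀ y ∈ H,
      R ≤ (wordDist Y x y : ℝ) →
      {g : G | (wordDist Y x (g * x) : ℝ) ≤ r ∧ (wordDist Y y (g * y) : ℝ) ≤ r}.Finite := by
  intro r hr
  obtain ⟨B, hB0, hB⟩ := hsep r hr
  refine ⟨B + 1, by linarith, ?_⟩
  intro x hx y hy hR
  -- every g in the set lies in H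
  have key : ∀ g : G, (wordDist Y x (g * x) : ℝ) ≤ r → (wordDist Y y (g * y) : ℝ) ≤ r →
      g ∈ H := by
    intro g h1 h2
    by_contra hgH
    have hne : (1 : G) • (H : Set G) ≠ g • (H : Set G) := by
      intro heq
      apply hgH
      have : g ∈ g • (H : Set G) := ⟨1, H.one_mem, mul_one g⟩
      rw [← heq, one_smul] at this
      exact this
    have hmemx : g * x ∈ {p : G | ∃ q ∈ (1 : G) • (H : Set G), (wordDist Y p q : ℝ) ≤ r}
        ∩ g • (H : Set G) := by
      refine ⟨⟨x, by simpa using hx, ?_⟩, ⟨x, hx, rfl⟩⟩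
      rw [wordDist_symm]
      exact h1
    have hmemy : g * y ∈ {p : G | ∃ q ∈ (1 : G) • (H : Set G), (wordDist Y p q : ℝ) ≤ r}
        ∩ g • (H : Set G) := by
      refine ⟨⟨y, by simpa using hy, ?_⟩, ⟨y, hy, rfl⟩⟩
      rw [wordDist_symm]
      exact h2
    have hd := hB 1 g hne _ hmemx _ hmemy
    rw [wordDist_congr Y (g := g * x) (h := g * y) (g' := x) (h' := y) (by group)] at hd
    linarith
  have hfin := hproper r hr
  apply Set.Finite.subset ((hfin.image (fun h => x * h * x⁻¹)))
  intro g hg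
  obtain ⟨h1, h2⟩ := hg
  have hgH := key g h1 h2
  refine ⟨x⁻¹ * g * x, ⟨H.mul_mem (H.mul_mem (H.inv_mem hx) hgH) hx, ?_⟩, by group⟩
  rw [wordDist_congr Y (g := (1 : G)) (h := x⁻¹ * g * x) (g' := x) (h' := g * x) (by group)]
  exact h1
end

section
/- Let G be a group, Y ⊆ G a generating set, and d_Y the word metric on G with respect to Y. Let H ≤ G be a subgroup such that for every D ≥ 0 there exists B ≥ 0 such that for all g₁, g₂ ∈ G with g₁H ≠ g₂H, the set N_D(g₁H) ∩ g₂H has diameter at most B with respect to d_Y. Then for every r ≥ 0 there exists R ≥ 0 such that for all x, y ∈ H with d_Y(x,y) ≥ R and every g ∈ G with d_Y(x, gx) ≤ r and d_Y(y, gy) ≤ r, one has g ∈ H. -/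
open Pointwise

lemma wordDist_mul_left {G : Type*} [Group G] (Y : Set G) (g a b : G) :
    wordDist Y (g * a) (g * b) = wordDist Y a b := by
  unfold wordDist
  congr 1
  ext n
  constructor <;> rintro ⟨w, hlen, hmem, hprod⟩ <;>
    exact ⟨w, hlen, hmem, by rw [hprod]; group⟩

/-- if the cosets of `H` are uniformly geometrically separated in the word
metric `d_Y`, then for every `r ≥ 0` there is `R ≥ 0` such that any `g` moving two points
of `H` at `d_Y`-distance at least `R` by at most `r` must lie in `H`. -/
theorem mem_of_small_displacement_of_coset_separation
    {G : Type*} [Group G] (Y : Set G) (hY : Subgroup.closure Y = ⊤) (H : Subgroup G)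
    (hsep : ∀ D : ℝ, 0 ≤ D → ∃ B : ℝ, 0 ≤ B ∧ ∀ g₁ g₂ : G,
      g₁ • (H : Set G) ≠ g₂ • (H : Set G) →
      ∀ a ∈ {g : G | ∃ p ∈ g₁ • (H : Set G), (wordDist Y g p : ℝ) ≤ D} ∩ g₂ • (H : Set G),
      ∀ b ∈ {g : G | ∃ p ∈ g₁ • (H : Set G), (wordDist Y g p : ℝ) ≤ D} ∩ g₂ • (H : Set G),
        (wordDist Y a b : ℝ) ≤ B) :
    ∀ r : ℝ, 0 ≤ r → ∃ R : ℝ, 0 ≤ R ∧ ∀ x ∈ H, ∀ y ∈ H,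
      R ≤ (wordDist Y x y : ℝ) →
      ∀ g : G, (wordDist Y x (g * x) : ℝ) ≤ r → (wordDist Y y (g * y) : ℝ) ≤ r →
        g ∈ H := by
  intro r hr
  obtain ⟨B, hB0, hB⟩ := hsep r hr
  refine ⟨B + 1, by linarith, ?_⟩
  intro x hx y hy hR g hgx hgy
  by_contra hg
  have hne : (1 : G) • (H : Set G) ≠ g • (H : Set G) := by
    intro h
    apply hg
    have : g ∈ g • (H : Set G) := ⟨1, H.one_mem, by simp⟩
    rw [← h, one_smul] at this
    exact this
  have ha : (g * x) ∈ {z : G | ∃ p ∈ (1 : G) • (H : Set G), (wordDist Y z p : ℝ) ≤ r}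
      ∩ g • (H : Set G) := by
    refine ⟨⟨x, by simpa using hx, ?_⟩, ⟨x, hx, rfl⟩⟩
    rw [wordDist_symm]; exact hgx
  have hb : (g * y) ∈ {z : G | ∃ p ∈ (1 : G) • (H : Set G), (wordDist Y z p : ℝ) ≤ r}
      ∩ g • (H : Set G) := by
    refine ⟨⟨y, by simpa using hy, ?_⟩, ⟨y, hy, rfl⟩⟩
    rw [wordDist_symm]; exact hgy
  have := hB 1 g hne _ ha _ hb
  rw [wordDist_mul_left] at this
  linarith
end
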